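/- Let G be a graph with χ(G) ≥ 2. The symset chromatic spectrum of G is the full interval of integers Σ_{χ_sym}(G) = {2, 3, …, χ(G)}; that is, for every integer i with 2 ≤ i ≤ χ(G) there is a signature σ_i of G with χ_sym(G,σ_i) = i, and every value χ_sym(G,σ) lies in this interval. -/

import Mathlib

/-!
Common framework for symmetric-set colorings of signed graphs
(C. Cappello, E. Steffen, "Symmetric set coloring of signed graphs").

* A signed graph is a `SimpleGraph V` together with a signature
  `σ : Sym2 V → Bool` (`true` = positive edge, `false` = negative edge);
  only the values of `σ` on edges of `G` matter.
* The canonical symmetric set `S_{2k}^t` with `t` self-inverse elements and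
  `k` pairs of non-self-inverse elements is `Sym t k := Fin t ⊕ Fin k × Bool`,
  with negation `symNeg` fixing the `Fin t` part and swapping the Boolean.
-/

namespace SymSet

/-- The canonical symmetric set `S_{2k}^t`. -/
abbrev Sym (t k : ℕ) := Fin t ⊕ Fin k × Bool

/-- Negation on the symmetric set: self-inverse elements are fixed,
the two elements of each pair are exchanged. -/
def symNeg {t k : ℕ} : Sym t k → Sym t k
  | .inl i => .inl i
  | .inr (i, b) => .inr (i, !b)

/-- Action of a sign on a color: a positive sign acts trivially,
a negative sign acts by negation. -/
def signAct {t k : ℕ} (s : Bool) (x : Sym t k) : Sym t k :=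
  if s then x else symNeg x

variable {V : Type*}

/-- A proper `S_{2k}^t`-coloring of the signed graph `(G, σ)`:
`c v ≠ σ(e) · c w` for every edge `e = vw`. -/
def IsProperColoring (G : SimpleGraph V) (σ : Sym2 V → Bool) {t k : ℕ}
    (c : V → Sym t k) : Prop :=
  ∀ ⦃v w : V⦄, G.Adj v w → c v ≠ signAct (σ s(v, w)) (c w)

/-- `(G, σ)` admits a proper `S_{2k}^t`-coloring. -/
def SymColorable (G : SimpleGraph V) (σ : Sym2 V → Bool) (t k : ℕ) : Prop :=
  ∃ c : V → Sym t k, IsProperColoring G σ c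

/-- The symset `t`-chromatic number `χ^t_sym(G, σ)`: the least `t + 2k`
such that `(G, σ)` admits a proper `S_{2k}^t`-coloring. -/
noncomputable def symChromT (G : SimpleGraph V) (σ : Sym2 V → Bool) (t : ℕ) : ℕ :=
  sInf {n | ∃ k, n = t + 2 * k ∧ SymColorable G σ t k}

/-- The chromatic number of the underlying graph, as a natural number. -/
noncomputable def chrom (G : SimpleGraph V) : ℕ := G.chromaticNumber.toNat

/-- The symset chromatic number `χ_sym(G, σ)`: the minimum of
`χ^t_sym(G, σ)` over `0 ≤ t ≤ χ(G)`. -/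
noncomputable def symChrom (G : SimpleGraph V) (σ : Sym2 V → Bool) : ℕ :=
  sInf {n | ∃ t ≤ chrom G, n = symChromT G σ t}

/-- Switching a signature at the vertex set `X = {v | X v = true}`:
the sign of every edge with exactly one end in `X` is reversed. -/
def switch (X : V → Bool) (σ : Sym2 V → Bool) : Sym2 V → Bool :=
  fun e =>
    xor (Sym2.lift ⟨fun u v => xor (X u) (X v), fun u v => by simp [Bool.xor_comm]⟩ e) (σ e)

/-- Two signatures of `G` are equivalent if one is obtained from the other by a
switching (equality of signs is only required on the edges of `G`). -/
def Equivalent (G : SimpleGraph V) (σ σ' : Sym2 V → Bool) : Prop :=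
  ∃ X : V → Bool, ∀ e ∈ G.edgeSet, σ' e = switch X σ e

/-- The number of negative edges of a closed walk. -/
def negCount (σ : Sym2 V → Bool) {G : SimpleGraph V} {u : V} (w : G.Walk u u) : ℕ :=
  (w.edges.filter (fun e => !σ e)).length

/-- `(G, σ)` is balanced: every circuit has sign `+1`,
i.e. an even number of negative edges. -/
def Balanced (G : SimpleGraph V) (σ : Sym2 V → Bool) : Prop :=
  ∀ ⦃u : V⦄ (w : G.Walk u u), w.IsCycle → Even (negCount σ w)

/-- `(G, σ)` is antibalanced: every even circuit has sign `+1` and every odd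
circuit has sign `-1`. -/
def Antibalanced (G : SimpleGraph V) (σ : Sym2 V → Bool) : Prop :=
  ∀ ⦃u : V⦄ (w : G.Walk u u), w.IsCycle → (Even w.length ↔ Even (negCount σ w))

/-- Restriction of a signature to (the induced subgraph on) a vertex subset. -/
def restrict (σ : Sym2 V → Bool) (s : Set V) : Sym2 s → Bool :=
  fun e => σ (Sym2.map Subtype.val e)

/-- A circuit: a connected 2-regular graph. -/
def IsCircuit (G : SimpleGraph V) [Fintype V] [DecidableRel G.Adj] : Prop :=
  G.Connected ∧ G.IsRegularOfDegree 2

/-- The frustration index `l(G, σ)`: the least number of edges whose deletion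
makes the signed graph balanced. -/
noncomputable def frustrationIndex (G : SimpleGraph V) (σ : Sym2 V → Bool) : ℕ :=
  sInf {n | ∃ F : Finset (Sym2 V), F.card = n ∧ Balanced (G.deleteEdges ↑F) σ}

/-- A proper coloring of the signed expansion `±G` (each edge of `G` replaced by
a positive and a negative parallel edge): for each edge `vw` of `G`,
`c v ∉ {c w, -c w}`. -/
def IsProperExpColoring (G : SimpleGraph V) {t k : ℕ} (c : V → Sym t k) : Prop :=
  ∀ ⦃v w : V⦄, G.Adj v w → c v ≠ c w ∧ c v ≠ symNeg (c w)

/-- The symset `t`-chromatic number of the signed expansion `±G`. -/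
noncomputable def expSymChromT (G : SimpleGraph V) (t : ℕ) : ℕ :=
  sInf {n | ∃ k, n = t + 2 * k ∧ ∃ c : V → Sym t k, IsProperExpColoring G c}

end SymSet

/-!
Colouring with the self-inverse elements only gives `χ_sym(G, σ) ≤ χ(G)`, and a colouring by fewer
than two colours is one by self-inverse colours, hence an ordinary colouring of `G`, so
`χ_sym(G, σ) ≥ 2`. For `2 ≤ i ≤ χ(G)` take an induced subgraph `H = G[T]` with `χ(H) = i`, colour
`H` bijectively by `S_2^{i-2}` and all other vertices by one non-self-inverse colour, and let
an edge be positive exactly when its ends get different colours. This colouring is proper, so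
`χ_sym(G, σ) ≤ i`; and since `σ` is positive on `H`, every proper colouring of `(G, σ)` restricts to
an ordinary colouring of `H`, so `χ_sym(G, σ) ≥ i`.
-/

namespace SymSet

section Lemmas

open SimpleGraph

variable {V : Type*} {G : SimpleGraph V}

section Chromatic

lemma chrom_le_iff_colorable [Finite V] {n : ℕ} : chrom G ≤ n ↔ G.Colorable n :=
  ⟨fun h => G.colorable_chromaticNumber_of_fintype.mono h,
    fun h => ENat.toNat_le_of_le_natCast h.chromaticNumber_le⟩

lemma colorable_induce_insert [DecidableEq V] {s : Finset V} {n : ℕ} (v : V)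
    (h : (G.induce (s : Set V)).Colorable n) :
    (G.induce (insert v s : Finset V)).Colorable (n + 1) := by
  obtain ⟨C⟩ := h
  let D : (G.induce (insert v s : Finset V)).Coloring (Option (Fin n)) :=
    Coloring.mk (fun u => if hu : u.1 ∈ s then some (C ⟨u.1, hu⟩) else none) fun {u w} huw => by
      have hu := Finset.mem_insert.1 u.2
      have hw := Finset.mem_insert.1 w.2
      have hne : u.1 ≠ w.1 := G.ne_of_adj huw
      by_cases hus : u.1 ∈ s <;> by_cases hws : w.1 ∈ s
      · simpa [hus, hws] using
          C.valid (show (G.induce (s : Set V)).Adj ⟨u.1, hus⟩ ⟨w.1, hws⟩ from huw)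
      · simp [hus, hws]
      · simp [hus, hws]
      · exact absurd ((hu.resolve_right hus).trans (hw.resolve_right hws).symm) hne
  simpa using D.colorable

/-- Adding a vertex raises the chromatic number by at most one, so walking up from `∅` to `s`
one meets a set whose induced subgraph has chromatic number exactly `n + 1`. -/
lemma exists_induce_colorable_succ_not_colorable [DecidableEq V] (n : ℕ) (s : Finset V)
    (hs : ¬(G.induce (s : Set V)).Colorable n) :
    ∃ T ⊆ s, (G.induce (T : Set V)).Colorable (n + 1) ∧ ¬(G.induce (T : Set V)).Colorable n := by
  induction s using Finset.induction_on with
  | empty => exact absurd (Colorable.of_isEmpty n) (by simpa using hs)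
  | insert v s _ ih =>
    by_cases hcol : (G.induce (s : Set V)).Colorable n
    · exact ⟨insert v s, subset_rfl, colorable_induce_insert v hcol, hs⟩
    · obtain ⟨T, hTs, hT⟩ := ih hcol
      exact ⟨T, hTs.trans (Finset.subset_insert v s), hT⟩

lemma exists_induce_colorable_succ_not_colorable_of_lt_chrom [Fintype V] {n : ℕ}
    (hn : n < chrom G) :
    ∃ T : Finset V, (G.induce (T : Set V)).Colorable (n + 1) ∧
      ¬(G.induce (T : Set V)).Colorable n := by
  classical
  have huniv : ¬(G.induce ((Finset.univ : Finset V) : Set V)).Colorable n := by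
    rw [Finset.coe_univ]
    exact fun h => (chrom_le_iff_colorable.2 (h.of_hom (induceUnivIso G).symm.toHom)).not_gt hn
  obtain ⟨T, -, hT⟩ := exists_induce_colorable_succ_not_colorable n Finset.univ huniv
  exact ⟨T, hT⟩

end Chromatic

section Coloring

variable {t k : ℕ}

@[simp]
lemma card_sym : Fintype.card (Sym t k) = t + 2 * k := by
  simp [mul_comm]

lemma signAct_eq_self_of_zero (s : Bool) (x : Sym t 0) : signAct s x = x := by
  rcases x with i | ⟨i, _⟩
  · cases s <;> rfl
  · exact i.elim0

lemma IsProperColoring.colorable {σ : Sym2 V → Bool} {c : V → Sym t k}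
    (hc : IsProperColoring G σ c)
    (hfix : ∀ ⦃v w : V⦄, G.Adj v w → signAct (σ s(v, w)) (c w) = c w) :
    G.Colorable (t + 2 * k) := by
  rw [← card_sym]
  exact (Coloring.mk c fun {v w} hvw => by simpa [hfix hvw] using hc hvw).colorable

lemma SymColorable.colorable_of_zero {σ : Sym2 V → Bool} (h : SymColorable G σ t 0) :
    G.Colorable t := by
  obtain ⟨c, hc⟩ := h
  simpa using hc.colorable fun v w _ => signAct_eq_self_of_zero _ (c w)

lemma SymColorable.colorable_of_positive {σ : Sym2 V → Bool} (h : SymColorable G σ t k)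
    (hσ : ∀ ⦃v w : V⦄, G.Adj v w → σ s(v, w) = true) : G.Colorable (t + 2 * k) := by
  obtain ⟨c, hc⟩ := h
  exact hc.colorable fun v w hvw => by simp [signAct, hσ hvw]

lemma SymColorable.induce {σ : Sym2 V → Bool} (h : SymColorable G σ t k) (s : Set V) :
    SymColorable (G.induce s) (restrict σ s) t k := by
  obtain ⟨c, hc⟩ := h
  exact ⟨fun u => c u.1, fun u w huw => hc huw⟩

lemma symColorable_of_colorable (σ : Sym2 V → Bool) (h : G.Colorable t) :
    SymColorable G σ t 0 := by
  obtain ⟨C⟩ := h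
  refine ⟨fun v => .inl (C v), fun v w hvw heq => C.valid hvw ?_⟩
  simpa [signAct_eq_self_of_zero] using heq

def separatingSignature (c : V → Sym t k) : Sym2 V → Bool :=
  Sym2.lift ⟨fun v w => decide (c v ≠ c w), fun v w => by simp [eq_comm]⟩

lemma separatingSignature_mk (c : V → Sym t k) (v w : V) :
    separatingSignature c s(v, w) = decide (c v ≠ c w) :=
  rfl

lemma isProperColoring_separatingSignature {c : V → Sym t k}
    (hc : ∀ ⦃v w : V⦄, G.Adj v w → c v = c w → symNeg (c v) ≠ c v) :
    IsProperColoring G (separatingSignature c) c := by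
  intro v w hvw
  by_cases heq : c v = c w
  · simpa [separatingSignature_mk, heq, signAct, eq_comm] using hc hvw heq
  · simp [separatingSignature_mk, heq, signAct]

end Coloring

section SymChrom

variable {σ : Sym2 V → Bool} {t k n : ℕ}

lemma symChromT_le (h : SymColorable G σ t k) : symChromT G σ t ≤ t + 2 * k :=
  Nat.sInf_le ⟨k, rfl, h⟩

lemma le_symChromT [Fintype V] (h : ∀ k, SymColorable G σ t k → n ≤ t + 2 * k) :
    n ≤ symChromT G σ t := by
  classical
  have hne : {m | ∃ k, m = t + 2 * k ∧ SymColorable G σ t k}.Nonempty :=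
    ⟨_, Fintype.card V, rfl, fun v => .inr (Fintype.equivFin V v, true), fun v w hvw heq => by
      cases hs : σ s(v, w) <;>
        simp_all [signAct, symNeg, (Fintype.equivFin V).injective.eq_iff, hvw.ne]⟩
  exact le_csInf hne fun _ ⟨k, hm, hk⟩ => hm ▸ h k hk

lemma symChrom_le (ht : t ≤ chrom G) : symChrom G σ ≤ symChromT G σ t :=
  Nat.sInf_le ⟨t, ht, rfl⟩

lemma le_symChrom (h : ∀ t ≤ chrom G, n ≤ symChromT G σ t) : n ≤ symChrom G σ :=
  le_csInf ⟨_, chrom G, le_rfl, rfl⟩ fun _ ⟨t, ht, hm⟩ => hm ▸ h t ht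

lemma symChrom_le_chrom [Finite V] (σ : Sym2 V → Bool) : symChrom G σ ≤ chrom G :=
  (symChrom_le le_rfl).trans
    (symChromT_le (symColorable_of_colorable σ (chrom_le_iff_colorable.1 le_rfl)))

lemma two_le_symChrom [Fintype V] (h : 2 ≤ chrom G) (σ : Sym2 V → Bool) : 2 ≤ symChrom G σ := by
  refine le_symChrom fun t _ => le_symChromT fun k hk => ?_
  rcases Nat.eq_zero_or_pos k with rfl | hk0
  · simpa using h.trans (chrom_le_iff_colorable.2 hk.colorable_of_zero)
  · omega

lemma exists_symChrom_eq [Fintype V] {j : ℕ} (hj : j + 2 ≤ chrom G) :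
    ∃ σ : Sym2 V → Bool, symChrom G σ = j + 2 := by
  classical
  obtain ⟨T, hcol, hncol⟩ := exists_induce_colorable_succ_not_colorable_of_lt_chrom hj
  let e := hcol.toColoring (α := Sym j 1) (by simp)
  let c : V → Sym j 1 := fun v => if hv : v ∈ T then e ⟨v, hv⟩ else .inr (0, true)
  have he : ∀ ⦃v w : V⦄ (hv : v ∈ T) (hw : w ∈ T), G.Adj v w → c v ≠ c w := fun v w hv hw hvw => by
    simpa [c, hv, hw] using e.valid (show (G.induce (T : Set V)).Adj ⟨v, hv⟩ ⟨w, hw⟩ from hvw)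
  have hc : ∀ ⦃v w : V⦄, G.Adj v w → c v = c w → symNeg (c v) ≠ c v := fun v w hvw heq => by
    have hcv : c v = .inr (0, true) := by
      by_cases hv : v ∈ T
      · by_cases hw : w ∈ T
        · exact absurd heq (he hv hw hvw)
        · simp [heq, c, hw]
      · simp [c, hv]
    simp [hcv, symNeg]
  refine ⟨separatingSignature c, le_antisymm ?_ ?_⟩
  · exact (symChrom_le (by omega)).trans
      (symChromT_le ⟨c, isProperColoring_separatingSignature hc⟩)
  · refine le_symChrom fun t _ => le_symChromT fun k hk => ?_
    have hpos : ∀ ⦃u w : (T : Set V)⦄, (G.induce (T : Set V)).Adj u w →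
        restrict (separatingSignature c) T s(u, w) = true := fun u w huw => by
      simpa [restrict, separatingSignature_mk] using he u.2 w.2 huw
    by_contra hlt
    exact hncol (((hk.induce T).colorable_of_positive hpos).mono (by omega))

end SymChrom

end Lemmas

/-- for a graph `G` with `χ(G) ≥ 2`, the symset chromatic
spectrum of `G` is the full interval `{2, 3, …, χ(G)}`: every value
`χ_sym(G,σ)` lies in this interval, and every integer of the interval is
attained by some signature. -/
theorem stmt17 {V : Type*} [Fintype V] (G : SimpleGraph V) (h : 2 ≤ chrom G) :
    {n | ∃ σ : Sym2 V → Bool, symChrom G σ = n} = Set.Icc 2 (chrom G) := by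
  ext n
  constructor
  · rintro ⟨σ, rfl⟩
    exact ⟨two_le_symChrom h σ, symChrom_le_chrom σ⟩
  · rintro ⟨h2n, hn⟩
    obtain ⟨j, rfl⟩ := Nat.exists_eq_add_of_le' h2n
    exact exists_symChrom_eq hn

end SymSet
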